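/- arXiv:2403.01053 — 4 statements merged into one kernel-verified Lean document; each statement's English description precedes it below -/
import Mathlib

section
/- For any unit vector μ on the unit sphere S of E, the vMF normalizing integral Z_μ is differentiable on ℝ, and its derivative is obtained by differentiating under the integral sign: for every κ ∈ ℝ, Z_μ has derivative Z_μ'(κ) = ∫_{z ∈ S} ⟪μ, z⟫ · exp(κ ⟪μ, z⟫) dσ(z) at κ. -/
open MeasureTheory Metric
open scoped RealInnerProductSpace

/-- The canonical surface measure on the unit sphere of `EuclideanSpace ℝ (Fin d)`. -/
noncomputable def sphMeas (d : ℕ) :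
    Measure (sphere (0 : EuclideanSpace ℝ (Fin d)) 1) :=
  (volume : Measure (EuclideanSpace ℝ (Fin d))).toSphere

/-- The vMF normalizing integral `Z_μ(κ) = ∫_{z ∈ S} exp (κ ⟪μ, z⟫) dσ(z)`. -/
noncomputable def Zfun (d : ℕ) (μ : sphere (0 : EuclideanSpace ℝ (Fin d)) 1) (κ : ℝ) : ℝ :=
  ∫ z, Real.exp (κ * ⟪(μ : EuclideanSpace ℝ (Fin d)), (z : EuclideanSpace ℝ (Fin d))⟫)
    ∂(sphMeas d)

/-- The first-moment integral `Z_μ'(κ) = ∫_{z ∈ S} ⟪μ, z⟫ · exp (κ ⟪μ, z⟫) dσ(z)`. -/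
noncomputable def Mfun (d : ℕ) (μ : sphere (0 : EuclideanSpace ℝ (Fin d)) 1) (κ : ℝ) : ℝ :=
  ∫ z, ⟪(μ : EuclideanSpace ℝ (Fin d)), (z : EuclideanSpace ℝ (Fin d))⟫ *
      Real.exp (κ * ⟪(μ : EuclideanSpace ℝ (Fin d)), (z : EuclideanSpace ℝ (Fin d))⟫)
    ∂(sphMeas d)

instance sphMeas_finite (d : ℕ) : IsFiniteMeasure (sphMeas d) := by
  unfold sphMeas; infer_instance

/-- `Z_μ` is differentiable on `ℝ`, with derivative obtained by differentiating under the
integral sign: `Z_μ'(κ) = ∫_{z ∈ S} ⟪μ, z⟫ · exp(κ ⟪μ, z⟫) dσ(z)`. -/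
theorem vMF_normalizer_hasDerivAt (d : ℕ) (hd : 2 ≤ d)
    (μ : sphere (0 : EuclideanSpace ℝ (Fin d)) 1) :
    Differentiable ℝ (Zfun d μ) ∧ ∀ κ : ℝ, HasDerivAt (Zfun d μ) (Mfun d μ κ) κ := by
  set E := EuclideanSpace ℝ (Fin d)
  have hinner : ∀ z : sphere (0 : E) 1, |⟪(μ : E), (z : E)⟫| ≤ 1 := by
    intro z
    calc |⟪(μ : E), (z : E)⟫| ≤ ‖(μ : E)‖ * ‖(z : E)‖ := abs_real_inner_le_norm _ _
    _ = 1 := by rw [norm_eq_of_mem_sphere, norm_eq_of_mem_sphere, one_mul]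
  have hcont : ∀ x : ℝ, Continuous fun z : sphere (0 : E) 1 =>
      Real.exp (x * ⟪(μ : E), (z : E)⟫) := by
    intro x
    exact (Real.continuous_exp.comp ((continuous_const.mul
      ((continuous_const.inner continuous_subtype_val)))))
  have hcont' : ∀ x : ℝ, Continuous fun z : sphere (0 : E) 1 =>
      ⟪(μ : E), (z : E)⟫ * Real.exp (x * ⟪(μ : E), (z : E)⟫) := by
    intro x
    exact (continuous_const.inner continuous_subtype_val).mul (hcont x)
  have key : ∀ κ : ℝ, HasDerivAt (Zfun d μ) (Mfun d μ κ) κ := by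
    intro κ
    have hint : Integrable (fun z : sphere (0 : E) 1 =>
        Real.exp (κ * ⟪(μ : E), (z : E)⟫)) (sphMeas d) := by
      refine (integrable_const (Real.exp (|κ| + 1))).mono'
        ((hcont κ).aestronglyMeasurable) (Filter.Eventually.of_forall fun z => ?_)
      rw [Real.norm_eq_abs, Real.abs_exp]
      apply Real.exp_le_exp.mpr
      calc κ * ⟪(μ : E), (z : E)⟫ ≤ |κ * ⟪(μ : E), (z : E)⟫| := le_abs_self _
      _ = |κ| * |⟪(μ : E), (z : E)⟫| := abs_mul _ _
      _ ≤ |κ| * 1 := mul_le_mul_of_nonneg_left (hinner z) (abs_nonneg _)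
      _ ≤ |κ| + 1 := by linarith
    have hbound : ∀ᵐ (z : sphere (0 : E) 1) ∂(sphMeas d), ∀ x ∈ ball κ 1,
        ‖⟪(μ : E), (z : E)⟫ * Real.exp (x * ⟪(μ : E), (z : E)⟫)‖ ≤ Real.exp (|κ| + 1) := by
      refine Filter.Eventually.of_forall fun z x hx => ?_
      have h1 := hinner z
      have : |x| ≤ |κ| + 1 := by
        have := mem_ball_iff_norm.mp hx
        have : |x - κ| < 1 := this
        calc |x| = |κ + (x - κ)| := by ring_nf
        _ ≤ |κ| + |x - κ| := abs_add_le _ _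
        _ ≤ |κ| + 1 := by linarith
      have hb : x * ⟪(μ : E), (z : E)⟫ ≤ |κ| + 1 := by
        calc x * ⟪(μ : E), (z : E)⟫ ≤ |x * ⟪(μ : E), (z : E)⟫| := le_abs_self _
        _ = |x| * |⟪(μ : E), (z : E)⟫| := abs_mul _ _
        _ ≤ (|κ| + 1) * 1 := by
            apply mul_le_mul this h1 (abs_nonneg _) (by positivity)
        _ = |κ| + 1 := mul_one _
      calc ‖⟪(μ : E), (z : E)⟫ * Real.exp (x * ⟪(μ : E), (z : E)⟫)‖
          = |⟪(μ : E), (z : E)⟫| * Real.exp (x * ⟪(μ : E), (z : E)⟫) := by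
            rw [norm_mul, Real.norm_eq_abs, Real.norm_eq_abs, Real.abs_exp]
        _ ≤ 1 * Real.exp (|κ| + 1) := by
            exact mul_le_mul h1 (Real.exp_le_exp.mpr hb) (Real.exp_nonneg _) one_pos.le
        _ = Real.exp (|κ| + 1) := one_mul _
    have hdiff : ∀ᵐ (z : sphere (0 : E) 1) ∂(sphMeas d), ∀ x ∈ ball κ 1,
        HasDerivAt (fun x => Real.exp (x * ⟪(μ : E), (z : E)⟫))
          (⟪(μ : E), (z : E)⟫ * Real.exp (x * ⟪(μ : E), (z : E)⟫)) x := by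
      refine Filter.Eventually.of_forall fun z x _ => ?_
      simpa [mul_comm] using ((hasDerivAt_id x).mul_const ⟪(μ : E), (z : E)⟫).exp
    have h := hasDerivAt_integral_of_dominated_loc_of_deriv_le
      (F := fun x (z : sphere (0 : E) 1) => Real.exp (x * ⟪(μ : E), (z : E)⟫))
      (F' := fun x (z : sphere (0 : E) 1) => ⟪(μ : E), (z : E)⟫ * Real.exp (x * ⟪(μ : E), (z : E)⟫))
      (bound := fun _ => Real.exp (|κ| + 1)) (ball_mem_nhds κ one_pos)
      (Filter.Eventually.of_forall fun x => ((hcont x).aestronglyMeasurable))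
      hint ((hcont' κ).aestronglyMeasurable) hbound (integrable_const _) hdiff
    exact h.2
  exact ⟨fun κ => (key κ).differentiableAt, key⟩
end

section
/- For any unit vector μ on the unit sphere S of E and any κ > 0, the mean resultant length of the vMF distribution lies strictly between 0 and 1: 0 < (∫_{z ∈ S} ⟪μ, z⟫ · exp(κ ⟪μ, z⟫) dσ(z)) / Z_μ(κ) < 1. -/
open MeasureTheory Metric
open scoped RealInnerProductSpace Pointwise

namespace VMFAux

/-- Sets of the sphere contained (after coercion) in a proper subspace are null. -/
lemma sphMeas_null_of_subset_submodule {d : ℕ}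
    {s : Set (sphere (0 : EuclideanSpace ℝ (Fin d)) 1)} (hs : MeasurableSet s)
    (p : Submodule ℝ (EuclideanSpace ℝ (Fin d))) (hp : p ≠ ⊤)
    (h : Subtype.val '' s ⊆ (p : Set (EuclideanSpace ℝ (Fin d)))) : sphMeas d s = 0 := by
  rw [sphMeas, Measure.toSphere_apply' volume hs]
  have hsub : Set.Ioo (0 : ℝ) 1 • (Subtype.val '' s) ⊆
      (p : Set (EuclideanSpace ℝ (Fin d))) := by
    rintro x ⟨r, hr, y, hy, rfl⟩
    exact p.smul_mem r (h hy)
  have hle := measure_mono (μ := (volume : Measure (EuclideanSpace ℝ (Fin d)))) hsub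
  rw [Measure.addHaar_submodule volume p hp] at hle
  rw [le_antisymm hle zero_le, mul_zero]

/-- Negation on the sphere. -/
noncomputable def negS (d : ℕ) (z : sphere (0 : EuclideanSpace ℝ (Fin d)) 1) :
    sphere (0 : EuclideanSpace ℝ (Fin d)) 1 :=
  ⟨-(z : EuclideanSpace ℝ (Fin d)), by
    rw [mem_sphere_zero_iff_norm, norm_neg, ← mem_sphere_zero_iff_norm]; exact z.2⟩

/-- Negation as a homeomorphism of the sphere. -/
noncomputable def negSphere (d : ℕ) : (sphere (0 : EuclideanSpace ℝ (Fin d)) 1) ≃ₜ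
    (sphere (0 : EuclideanSpace ℝ (Fin d)) 1) where
  toFun := negS d
  invFun := negS d
  left_inv z := Subtype.ext (neg_neg _)
  right_inv z := Subtype.ext (neg_neg _)
  continuous_toFun := (continuous_subtype_val.neg).subtype_mk _
  continuous_invFun := (continuous_subtype_val.neg).subtype_mk _

lemma coe_negSphere {d : ℕ} (z : sphere (0 : EuclideanSpace ℝ (Fin d)) 1) :
    ((negSphere d z : sphere (0 : EuclideanSpace ℝ (Fin d)) 1) : EuclideanSpace ℝ (Fin d))
      = -(z : EuclideanSpace ℝ (Fin d)) := rfl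

lemma measurePreserving_negSphere {d : ℕ} :
    MeasurePreserving (negSphere d) (sphMeas d) (sphMeas d) := by
  refine ⟨(negSphere d).continuous.measurable, ?_⟩
  refine Measure.ext fun s hs => ?_
  rw [Measure.map_apply (negSphere d).continuous.measurable hs]
  have himg : Subtype.val '' ((negSphere d) ⁻¹' s) = -(Subtype.val '' s) := by
    ext x
    simp only [Set.mem_neg, Set.mem_image, Set.mem_preimage]
    constructor
    · rintro ⟨w, hw, rfl⟩
      exact ⟨negSphere d w, hw, rfl⟩
    · rintro ⟨w, hw, hwx⟩
      refine ⟨negSphere d w, ?_, by rw [coe_negSphere, hwx, neg_neg]⟩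
      have hne : negSphere d (negSphere d w) = w :=
        Subtype.ext (by rw [coe_negSphere, coe_negSphere, neg_neg])
      rw [hne]; exact hw
  rw [sphMeas,
    Measure.toSphere_apply' volume ((negSphere d).continuous.measurable hs),
    Measure.toSphere_apply' volume hs, himg, Set.smul_neg, Measure.measure_neg]

lemma integrable_cont {d : ℕ} (f : (sphere (0 : EuclideanSpace ℝ (Fin d)) 1) → ℝ)
    (hf : Continuous f) : Integrable f (sphMeas d) := by
  haveI : IsFiniteMeasure (sphMeas d) :=
    inferInstanceAs (IsFiniteMeasure (volume : Measure (EuclideanSpace ℝ (Fin d))).toSphere)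
  exact hf.integrable_of_hasCompactSupport (HasCompactSupport.of_compactSpace f)

end VMFAux

open VMFAux

/-- The mean resultant length of the vMF distribution lies strictly between 0 and 1 for
any concentration `κ > 0`. -/
theorem vMF_mean_resultant_length_mem_Ioo (d : ℕ) (hd : 2 ≤ d)
    (μ : sphere (0 : EuclideanSpace ℝ (Fin d)) 1) (κ : ℝ) (hκ : 0 < κ) :
    0 < Mfun d μ κ / Zfun d μ κ ∧ Mfun d μ κ / Zfun d μ κ < 1 := by
  have hμnorm : ‖(μ : EuclideanSpace ℝ (Fin d))‖ = 1 := by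
    have := μ.2; rwa [mem_sphere_zero_iff_norm] at this
  have hμne : (μ : EuclideanSpace ℝ (Fin d)) ≠ 0 := by
    intro h; rw [h] at hμnorm; simp at hμnorm
  have hcont_t : Continuous fun z : sphere (0 : EuclideanSpace ℝ (Fin d)) 1 =>
      ⟪(μ : EuclideanSpace ℝ (Fin d)), (z : EuclideanSpace ℝ (Fin d))⟫ :=
    Continuous.inner continuous_const continuous_subtype_val
  have htle : ∀ z : sphere (0 : EuclideanSpace ℝ (Fin d)) 1,
      ⟪(μ : EuclideanSpace ℝ (Fin d)), (z : EuclideanSpace ℝ (Fin d))⟫ ≤ 1 := by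
    intro z
    have hz : ‖(z : EuclideanSpace ℝ (Fin d))‖ = 1 := by
      have := z.2; rwa [mem_sphere_zero_iff_norm] at this
    calc ⟪(μ : EuclideanSpace ℝ (Fin d)), (z : EuclideanSpace ℝ (Fin d))⟫
        ≤ ‖(μ : EuclideanSpace ℝ (Fin d))‖ * ‖(z : EuclideanSpace ℝ (Fin d))‖ :=
          real_inner_le_norm _ _
      _ = 1 := by rw [hμnorm, hz]; ring
  have hintZ : Integrable (fun z : sphere (0 : EuclideanSpace ℝ (Fin d)) 1 =>
      Real.exp (κ * ⟪(μ : EuclideanSpace ℝ (Fin d)), (z : EuclideanSpace ℝ (Fin d))⟫))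
      (sphMeas d) :=
    integrable_cont _ ((continuous_const.mul hcont_t).rexp)
  have hintM : Integrable (fun z : sphere (0 : EuclideanSpace ℝ (Fin d)) 1 =>
      ⟪(μ : EuclideanSpace ℝ (Fin d)), (z : EuclideanSpace ℝ (Fin d))⟫ *
        Real.exp (κ * ⟪(μ : EuclideanSpace ℝ (Fin d)), (z : EuclideanSpace ℝ (Fin d))⟫))
      (sphMeas d) :=
    integrable_cont _ (hcont_t.mul ((continuous_const.mul hcont_t).rexp))
  have hσuniv : 0 < sphMeas d Set.univ := by
    rw [sphMeas, Measure.toSphere_apply_univ]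
    have h1 : (0 : ENNReal) < volume (ball (0 : EuclideanSpace ℝ (Fin d)) 1) :=
      measure_ball_pos volume 0 one_pos
    have h2 : 0 < Module.finrank ℝ (EuclideanSpace ℝ (Fin d)) := by
      rw [finrank_euclideanSpace_fin]; omega
    exact ENNReal.mul_pos (by exact_mod_cast Nat.cast_pos.mpr h2 |>.ne') h1.ne'
  have hker : sphMeas d {z : sphere (0 : EuclideanSpace ℝ (Fin d)) 1 |
      ⟪(μ : EuclideanSpace ℝ (Fin d)), (z : EuclideanSpace ℝ (Fin d))⟫ = 0} = 0 := by
    refine sphMeas_null_of_subset_submodule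
      (hcont_t.measurable (measurableSet_singleton 0))
      (LinearMap.ker (innerSL ℝ (μ : EuclideanSpace ℝ (Fin d))).toLinearMap) ?_ ?_
    · intro h
      have hmem : (μ : EuclideanSpace ℝ (Fin d)) ∈
          LinearMap.ker (innerSL ℝ (μ : EuclideanSpace ℝ (Fin d))).toLinearMap := h ▸ Submodule.mem_top
      rw [LinearMap.mem_ker] at hmem
      simp only [ContinuousLinearMap.coe_coe, innerSL_apply_apply] at hmem
      rw [real_inner_self_eq_norm_sq, hμnorm] at hmem
      norm_num at hmem
    · rintro x ⟨z, hz, rfl⟩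
      simpa [LinearMap.mem_ker] using hz
  have hone : sphMeas d {z : sphere (0 : EuclideanSpace ℝ (Fin d)) 1 |
      ⟪(μ : EuclideanSpace ℝ (Fin d)), (z : EuclideanSpace ℝ (Fin d))⟫ = 1} = 0 := by
    refine sphMeas_null_of_subset_submodule
      (hcont_t.measurable (measurableSet_singleton 1))
      (Submodule.span ℝ {(μ : EuclideanSpace ℝ (Fin d))}) ?_ ?_
    · intro h
      have h1 : Module.finrank ℝ (Submodule.span ℝ {(μ : EuclideanSpace ℝ (Fin d))}) = 1 :=
        finrank_span_singleton hμne
      rw [h, finrank_top, finrank_euclideanSpace_fin] at h1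
      omega
    · rintro x ⟨z, hz, rfl⟩
      have hz1 : ⟪(μ : EuclideanSpace ℝ (Fin d)), (z : EuclideanSpace ℝ (Fin d))⟫ = 1 := hz
      have hz' : ‖(z : EuclideanSpace ℝ (Fin d))‖ = 1 := by
        have := z.2; rwa [mem_sphere_zero_iff_norm] at this
      have hmz : (μ : EuclideanSpace ℝ (Fin d)) = (z : EuclideanSpace ℝ (Fin d)) :=
        (inner_eq_one_iff_of_norm_eq_one hμnorm hz').mp hz1
      rw [← hmz]
      exact Submodule.mem_span_singleton_self _
  have hZpos : 0 < Zfun d μ κ := by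
    rw [Zfun, integral_pos_iff_support_of_nonneg (fun z => (Real.exp_pos _).le) hintZ]
    have hsupp : (Function.support fun z : sphere (0 : EuclideanSpace ℝ (Fin d)) 1 =>
        Real.exp (κ * ⟪(μ : EuclideanSpace ℝ (Fin d)), (z : EuclideanSpace ℝ (Fin d))⟫))
        = Set.univ := by
      ext z; simp [Function.mem_support, (Real.exp_pos _).ne']
    rw [hsupp]; exact hσuniv
  have hMltZ : Mfun d μ κ < Zfun d μ κ := by
    have hkey : 0 < ∫ z, (1 - ⟪(μ : EuclideanSpace ℝ (Fin d)), (z : EuclideanSpace ℝ (Fin d))⟫) *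
        Real.exp (κ * ⟪(μ : EuclideanSpace ℝ (Fin d)), (z : EuclideanSpace ℝ (Fin d))⟫)
        ∂(sphMeas d) := by
      rw [integral_pos_iff_support_of_nonneg
        (fun z => mul_nonneg (by linarith [htle z]) (Real.exp_pos _).le)
        (integrable_cont (fun z : sphere (0 : EuclideanSpace ℝ (Fin d)) 1 => (1 - ⟪(μ : EuclideanSpace ℝ (Fin d)), (z : EuclideanSpace ℝ (Fin d))⟫) *
          Real.exp (κ * ⟪(μ : EuclideanSpace ℝ (Fin d)), (z : EuclideanSpace ℝ (Fin d))⟫)) ((continuous_const.sub hcont_t).mul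
          ((continuous_const.mul hcont_t).rexp)))]
      have hsup : {z : sphere (0 : EuclideanSpace ℝ (Fin d)) 1 |
          ⟪(μ : EuclideanSpace ℝ (Fin d)), (z : EuclideanSpace ℝ (Fin d))⟫ = 1}ᶜ ⊆
          Function.support fun z : sphere (0 : EuclideanSpace ℝ (Fin d)) 1 =>
            (1 - ⟪(μ : EuclideanSpace ℝ (Fin d)), (z : EuclideanSpace ℝ (Fin d))⟫) *
            Real.exp (κ * ⟪(μ : EuclideanSpace ℝ (Fin d)), (z : EuclideanSpace ℝ (Fin d))⟫) := by
        intro z hz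
        simp only [Set.mem_compl_iff, Set.mem_setOf_eq] at hz
        simp only [Function.mem_support]
        exact mul_ne_zero (sub_ne_zero.mpr (fun h => hz h.symm)) (Real.exp_pos _).ne'
      refine lt_of_lt_of_le ?_ (measure_mono hsup)
      have hle := measure_union_le (μ := sphMeas d)
        {z : sphere (0 : EuclideanSpace ℝ (Fin d)) 1 |
          ⟪(μ : EuclideanSpace ℝ (Fin d)), (z : EuclideanSpace ℝ (Fin d))⟫ = 1}
        {z : sphere (0 : EuclideanSpace ℝ (Fin d)) 1 |
          ⟪(μ : EuclideanSpace ℝ (Fin d)), (z : EuclideanSpace ℝ (Fin d))⟫ = 1}ᶜ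
      rw [Set.union_compl_self, hone, zero_add] at hle
      exact lt_of_lt_of_le hσuniv hle
    have heq : ∫ z, (1 - ⟪(μ : EuclideanSpace ℝ (Fin d)), (z : EuclideanSpace ℝ (Fin d))⟫) *
        Real.exp (κ * ⟪(μ : EuclideanSpace ℝ (Fin d)), (z : EuclideanSpace ℝ (Fin d))⟫)
        ∂(sphMeas d) = Zfun d μ κ - Mfun d μ κ := by
      rw [Zfun, Mfun, ← integral_sub hintZ hintM]
      congr 1; ext z; ring
    rw [heq] at hkey
    linarith
  have hMpos : 0 < Mfun d μ κ := by
    have hsym : Mfun d μ κ = ∫ z,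
        -⟪(μ : EuclideanSpace ℝ (Fin d)), (z : EuclideanSpace ℝ (Fin d))⟫ *
        Real.exp (-(κ * ⟪(μ : EuclideanSpace ℝ (Fin d)), (z : EuclideanSpace ℝ (Fin d))⟫))
        ∂(sphMeas d) := by
      rw [Mfun]
      rw [← measurePreserving_negSphere.integral_comp (negSphere d).measurableEmbedding
        (fun z : sphere (0 : EuclideanSpace ℝ (Fin d)) 1 =>
          ⟪(μ : EuclideanSpace ℝ (Fin d)), (z : EuclideanSpace ℝ (Fin d))⟫ *
          Real.exp (κ * ⟪(μ : EuclideanSpace ℝ (Fin d)), (z : EuclideanSpace ℝ (Fin d))⟫))]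
      refine integral_congr_ae (Filter.Eventually.of_forall fun z => ?_)
      simp only [coe_negSphere, inner_neg_right]
      ring_nf
    have hintM'' : Integrable (fun z : sphere (0 : EuclideanSpace ℝ (Fin d)) 1 =>
        -⟪(μ : EuclideanSpace ℝ (Fin d)), (z : EuclideanSpace ℝ (Fin d))⟫ *
        Real.exp (-(κ * ⟪(μ : EuclideanSpace ℝ (Fin d)), (z : EuclideanSpace ℝ (Fin d))⟫)))
        (sphMeas d) :=
      integrable_cont _ (hcont_t.neg.mul ((continuous_const.mul hcont_t).neg.rexp))
    have hkey : 0 < ∫ z, ⟪(μ : EuclideanSpace ℝ (Fin d)), (z : EuclideanSpace ℝ (Fin d))⟫ *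
        (Real.exp (κ * ⟪(μ : EuclideanSpace ℝ (Fin d)), (z : EuclideanSpace ℝ (Fin d))⟫) -
         Real.exp (-(κ * ⟪(μ : EuclideanSpace ℝ (Fin d)), (z : EuclideanSpace ℝ (Fin d))⟫)))
        ∂(sphMeas d) := by
      have hnn : ∀ z : sphere (0 : EuclideanSpace ℝ (Fin d)) 1,
          0 ≤ ⟪(μ : EuclideanSpace ℝ (Fin d)), (z : EuclideanSpace ℝ (Fin d))⟫ *
          (Real.exp (κ * ⟪(μ : EuclideanSpace ℝ (Fin d)), (z : EuclideanSpace ℝ (Fin d))⟫) -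
           Real.exp (-(κ * ⟪(μ : EuclideanSpace ℝ (Fin d)), (z : EuclideanSpace ℝ (Fin d))⟫))) := by
        intro z
        set t := ⟪(μ : EuclideanSpace ℝ (Fin d)), (z : EuclideanSpace ℝ (Fin d))⟫ with ht
        rcases le_or_gt 0 t with htp | htn
        · refine mul_nonneg htp ?_
          have : -(κ * t) ≤ κ * t := by nlinarith
          linarith [Real.exp_le_exp.mpr this]
        · have hle : Real.exp (κ * t) ≤ Real.exp (-(κ * t)) :=
            Real.exp_le_exp.mpr (by nlinarith)
          nlinarith
      rw [integral_pos_iff_support_of_nonneg hnn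
        (integrable_cont _ (hcont_t.mul (((continuous_const.mul hcont_t).rexp).sub
          ((continuous_const.mul hcont_t).neg.rexp))))]
      have hsup : {z : sphere (0 : EuclideanSpace ℝ (Fin d)) 1 |
          ⟪(μ : EuclideanSpace ℝ (Fin d)), (z : EuclideanSpace ℝ (Fin d))⟫ = 0}ᶜ ⊆
          Function.support fun z : sphere (0 : EuclideanSpace ℝ (Fin d)) 1 =>
            ⟪(μ : EuclideanSpace ℝ (Fin d)), (z : EuclideanSpace ℝ (Fin d))⟫ *
            (Real.exp (κ * ⟪(μ : EuclideanSpace ℝ (Fin d)), (z : EuclideanSpace ℝ (Fin d))⟫) -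
             Real.exp (-(κ * ⟪(μ : EuclideanSpace ℝ (Fin d)), (z : EuclideanSpace ℝ (Fin d))⟫))) := by
        intro z hz
        simp only [Set.mem_compl_iff, Set.mem_setOf_eq] at hz
        simp only [Function.mem_support]
        refine mul_ne_zero hz (sub_ne_zero.mpr ?_)
        intro h
        have hinj := Real.exp_injective h
        rcases lt_or_gt_of_ne hz with ht | ht <;> nlinarith
      refine lt_of_lt_of_le ?_ (measure_mono hsup)
      have hle := measure_union_le (μ := sphMeas d)
        {z : sphere (0 : EuclideanSpace ℝ (Fin d)) 1 |
          ⟪(μ : EuclideanSpace ℝ (Fin d)), (z : EuclideanSpace ℝ (Fin d))⟫ = 0}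
        {z : sphere (0 : EuclideanSpace ℝ (Fin d)) 1 |
          ⟪(μ : EuclideanSpace ℝ (Fin d)), (z : EuclideanSpace ℝ (Fin d))⟫ = 0}ᶜ
      rw [Set.union_compl_self, hker, zero_add] at hle
      exact lt_of_lt_of_le hσuniv hle
    have heq : ∫ z, ⟪(μ : EuclideanSpace ℝ (Fin d)), (z : EuclideanSpace ℝ (Fin d))⟫ *
        (Real.exp (κ * ⟪(μ : EuclideanSpace ℝ (Fin d)), (z : EuclideanSpace ℝ (Fin d))⟫) -
         Real.exp (-(κ * ⟪(μ : EuclideanSpace ℝ (Fin d)), (z : EuclideanSpace ℝ (Fin d))⟫)))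
        ∂(sphMeas d) = Mfun d μ κ + Mfun d μ κ := by
      have hfun : (fun z : sphere (0 : EuclideanSpace ℝ (Fin d)) 1 =>
          ⟪(μ : EuclideanSpace ℝ (Fin d)), (z : EuclideanSpace ℝ (Fin d))⟫ *
          (Real.exp (κ * ⟪(μ : EuclideanSpace ℝ (Fin d)), (z : EuclideanSpace ℝ (Fin d))⟫) -
           Real.exp (-(κ * ⟪(μ : EuclideanSpace ℝ (Fin d)), (z : EuclideanSpace ℝ (Fin d))⟫))))
          = (fun z : sphere (0 : EuclideanSpace ℝ (Fin d)) 1 =>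
          (⟪(μ : EuclideanSpace ℝ (Fin d)), (z : EuclideanSpace ℝ (Fin d))⟫ *
            Real.exp (κ * ⟪(μ : EuclideanSpace ℝ (Fin d)), (z : EuclideanSpace ℝ (Fin d))⟫)) +
          (-⟪(μ : EuclideanSpace ℝ (Fin d)), (z : EuclideanSpace ℝ (Fin d))⟫ *
            Real.exp (-(κ * ⟪(μ : EuclideanSpace ℝ (Fin d)), (z : EuclideanSpace ℝ (Fin d))⟫)))) := by
        ext z; ring
      rw [hfun, integral_add hintM hintM'', ← Mfun, ← hsym]
    rw [heq] at hkey
    linarith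
  exact ⟨div_pos hMpos hZpos, (div_lt_one hZpos).mpr hMltZ⟩
end

section
/- For any unit vector μ on the unit sphere S of E, the mean resultant function A(κ) = Z_μ'(κ)/Z_μ(κ), where Z_μ'(κ) = ∫_{z ∈ S} ⟪μ, z⟫ · exp(κ ⟪μ, z⟫) dσ(z), is strictly monotonically increasing on ℝ: for κ₁ < κ₂ one has A(κ₁) < A(κ₂). -/
open MeasureTheory Metric
open scoped RealInnerProductSpace

section Aux

open Set
open scoped Pointwise ENNReal

variable {d : ℕ}

local notation "E" => EuclideanSpace ℝ (Fin d)
local notation "S" => sphere (0 : EuclideanSpace ℝ (Fin d)) 1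

instance : IsFiniteMeasure (sphMeas d) := by
  unfold sphMeas; infer_instance

/-- Continuous functions on the sphere are integrable for `sphMeas`. -/
lemma integrable_sphMeas {f : S → ℝ} (hf : Continuous f) :
    Integrable f (sphMeas d) :=
  hf.integrable_of_hasCompactSupport (HasCompactSupport.of_compactSpace f)

/-- The surface measure is positive on nonempty open sets. -/
lemma sphMeas_pos_of_isOpen (hd : 1 ≤ d) {U : Set S} (hU : IsOpen U)
    (hne : U.Nonempty) : 0 < sphMeas d U := by
  obtain ⟨W, hW, rfl⟩ := isOpen_induced_iff.1 hU
  have himg : ((Subtype.val : S → E) '' ((Subtype.val : S → E) ⁻¹' W)) = W ∩ S := by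
    rw [Subtype.image_preimage_coe, Set.inter_comm]
  rw [sphMeas, Measure.toSphere_apply' _ hU.measurableSet, himg]
  set V : Set E := Ioo (0 : ℝ) 1 • (W ∩ S) with hV
  have hVeq : V = {x : E | x ≠ 0 ∧ ‖x‖ < 1} ∩ (fun x : E => ‖x‖⁻¹ • x) ⁻¹' W := by
    ext x
    constructor
    · rintro ⟨r, hr, u, ⟨huW, huS⟩, rfl⟩
      have hu1 : ‖u‖ = 1 := mem_sphere_zero_iff_norm.1 huS
      have hnorm : ‖r • u‖ = r := by
        rw [norm_smul, hu1, Real.norm_eq_abs, abs_of_pos hr.1, mul_one]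
      refine ⟨⟨?_, by rw [hnorm]; exact hr.2⟩, ?_⟩
      · intro h0
        have h0' : r • u = (0 : EuclideanSpace ℝ (Fin d)) := h0
        rw [h0', norm_zero] at hnorm; exact hr.1.ne hnorm
      · show ‖r • u‖⁻¹ • r • u ∈ W
        rw [hnorm, smul_smul, inv_mul_cancel₀ hr.1.ne', one_smul]; exact huW
    · rintro ⟨⟨hx0, hx1⟩, hxW⟩
      have hxn : (0 : ℝ) < ‖x‖ := norm_pos_iff.2 hx0
      refine ⟨‖x‖, ⟨hxn, hx1⟩, ‖x‖⁻¹ • x, ⟨hxW, ?_⟩, ?_⟩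
      · rw [mem_sphere_zero_iff_norm, norm_smul, norm_inv, norm_norm,
          inv_mul_cancel₀ hxn.ne']
      · show ‖x‖ • ‖x‖⁻¹ • x = x
        rw [smul_smul, mul_inv_cancel₀ hxn.ne', one_smul]
  have hAopen : IsOpen {x : E | x ≠ 0 ∧ ‖x‖ < 1} := by
    have : {x : E | x ≠ 0 ∧ ‖x‖ < 1} = {(0 : E)}ᶜ ∩ ball 0 1 := by
      ext x; simp [mem_ball, dist_zero_right, and_comm]
    rw [this]
    exact (isOpen_compl_singleton).inter isOpen_ball
  have hVopen : IsOpen V := by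
    rw [hVeq]
    refine (ContinuousOn.isOpen_inter_preimage ?_ hAopen hW)
    exact ContinuousOn.smul
      ((continuous_norm.continuousOn).inv₀ fun x hx => norm_ne_zero_iff.2 hx.1)
      continuousOn_id
  have hVne : V.Nonempty := by
    obtain ⟨u, hu⟩ := hne
    exact ⟨(1/2 : ℝ) • (u : E), ⟨1/2, ⟨by norm_num, by norm_num⟩, u,
      ⟨hu, u.2⟩, rfl⟩⟩
  have hvol : 0 < volume V := hVopen.measure_pos volume hVne
  have hdim : (0 : ℝ≥0∞) < Module.finrank ℝ (EuclideanSpace ℝ (Fin d)) := by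
    rw [finrank_euclideanSpace_fin]
    exact_mod_cast Nat.lt_of_lt_of_le Nat.zero_lt_one hd
  exact ENNReal.mul_pos hdim.ne' hvol.ne'

end Aux

/-- The mean resultant function `A(κ) = Z_μ'(κ)/Z_μ(κ)` is strictly monotonically
increasing on `ℝ`. -/
theorem vMF_mean_resultant_strictMono (d : ℕ) (hd : 2 ≤ d)
    (μ : sphere (0 : EuclideanSpace ℝ (Fin d)) 1) :
    ∀ κ₁ κ₂ : ℝ, κ₁ < κ₂ → Mfun d μ κ₁ / Zfun d μ κ₁ < Mfun d μ κ₂ / Zfun d μ κ₂ := by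
  intro κ₁ κ₂ hκ
  have hd1 : 1 ≤ d := le_trans one_le_two hd
  set σ := sphMeas d
  set t : sphere (0 : EuclideanSpace ℝ (Fin d)) 1 → ℝ :=
    fun z => ⟪(μ : EuclideanSpace ℝ (Fin d)), (z : EuclideanSpace ℝ (Fin d))⟫ with ht
  have htc : Continuous t :=
    Continuous.inner continuous_const continuous_subtype_val
  have hZdef : ∀ κ, Zfun d μ κ = ∫ z, Real.exp (κ * t z) ∂σ := fun κ => rfl
  have hMdef : ∀ κ, Mfun d μ κ = ∫ z, t z * Real.exp (κ * t z) ∂σ := fun κ => rfl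
  -- integrability of the basic integrands
  have hZint : ∀ κ : ℝ, Integrable (fun z => Real.exp (κ * t z)) σ := fun κ =>
    integrable_sphMeas (Real.continuous_exp.comp ((continuous_const.mul htc)))
  have hMint : ∀ κ : ℝ, Integrable (fun z => t z * Real.exp (κ * t z)) σ := fun κ =>
    integrable_sphMeas (htc.mul (Real.continuous_exp.comp (continuous_const.mul htc)))
  -- positivity of Z
  have hσuniv : 0 < σ Set.univ :=
    sphMeas_pos_of_isOpen hd1 isOpen_univ ⟨μ, trivial⟩
  have hZpos : ∀ κ : ℝ, 0 < Zfun d μ κ := by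
    intro κ
    rw [hZdef]
    refine (integral_pos_iff_support_of_nonneg (fun z => (Real.exp_pos _).le)
      (hZint κ)).2 ?_
    have : Function.support (fun z => Real.exp (κ * t z)) = Set.univ := by
      ext z; simp [(Real.exp_pos (κ * t z)).ne']
    rw [this]; exact hσuniv
  -- the two-point function
  set π := σ.prod σ with hπ
  set F : (sphere (0 : EuclideanSpace ℝ (Fin d)) 1) ×
      (sphere (0 : EuclideanSpace ℝ (Fin d)) 1) → ℝ :=
    fun p => (t p.1 - t p.2) *
      (Real.exp (κ₂ * t p.1 + κ₁ * t p.2) - Real.exp (κ₁ * t p.1 + κ₂ * t p.2)) with hF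
  have hprodint : ∀ {g : (sphere (0 : EuclideanSpace ℝ (Fin d)) 1) ×
      (sphere (0 : EuclideanSpace ℝ (Fin d)) 1) → ℝ}, Continuous g → Integrable g π :=
    fun hg => hg.integrable_of_hasCompactSupport (HasCompactSupport.of_compactSpace _)
  have ht1 : Continuous fun p : (sphere (0 : EuclideanSpace ℝ (Fin d)) 1) ×
      (sphere (0 : EuclideanSpace ℝ (Fin d)) 1) => t p.1 := htc.comp continuous_fst
  have ht2 : Continuous fun p : (sphere (0 : EuclideanSpace ℝ (Fin d)) 1) ×
      (sphere (0 : EuclideanSpace ℝ (Fin d)) 1) => t p.2 := htc.comp continuous_snd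
  have hFcont : Continuous F := by
    apply (ht1.sub ht2).mul
    exact (Real.continuous_exp.comp ((continuous_const.mul ht1).add
        (continuous_const.mul ht2))).sub
      (Real.continuous_exp.comp ((continuous_const.mul ht1).add
        (continuous_const.mul ht2)))
  have hFint : Integrable F π := hprodint hFcont
  have hFnonneg : ∀ p, 0 ≤ F p := by
    intro p
    rcases le_total (t p.1) (t p.2) with h | h
    · have h1 : t p.1 - t p.2 ≤ 0 := sub_nonpos.2 h
      have h2 : Real.exp (κ₂ * t p.1 + κ₁ * t p.2) - Real.exp (κ₁ * t p.1 + κ₂ * t p.2) ≤ 0 :=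
        sub_nonpos.2 (Real.exp_le_exp.2 (by nlinarith))
      have := mul_nonneg (neg_nonneg.2 h1) (neg_nonneg.2 h2)
      rw [neg_mul_neg] at this
      exact this
    · apply mul_nonneg
      · exact sub_nonneg.2 h
      · exact sub_nonneg.2 (Real.exp_le_exp.2 (by nlinarith))
  -- positive measure of the support of F
  have hμS : t μ = 1 := by
    have : ‖(μ : EuclideanSpace ℝ (Fin d))‖ = 1 := mem_sphere_zero_iff_norm.1 μ.2
    show ⟪(μ : EuclideanSpace ℝ (Fin d)), (μ : EuclideanSpace ℝ (Fin d))⟫ = 1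
    rw [real_inner_self_eq_norm_sq, this]; norm_num
  have hnegμ : ‖-(μ : EuclideanSpace ℝ (Fin d)) - 0‖ = 1 := by
    rw [sub_zero, norm_neg]; exact mem_sphere_zero_iff_norm.1 μ.2
  set ν : sphere (0 : EuclideanSpace ℝ (Fin d)) 1 :=
    ⟨-(μ : EuclideanSpace ℝ (Fin d)), by
      rw [mem_sphere_iff_norm]; exact hnegμ⟩ with hν
  have hνval : t ν = -1 := by
    show ⟪(μ : EuclideanSpace ℝ (Fin d)), -(μ : EuclideanSpace ℝ (Fin d))⟫ = -1
    rw [inner_neg_right]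
    have : ‖(μ : EuclideanSpace ℝ (Fin d))‖ = 1 := mem_sphere_zero_iff_norm.1 μ.2
    rw [real_inner_self_eq_norm_sq, this]; norm_num
  have hA : 0 < σ (t ⁻¹' Set.Ioi 0) :=
    sphMeas_pos_of_isOpen hd1 (isOpen_Ioi.preimage htc)
      ⟨μ, by simp [Set.mem_preimage, hμS]⟩
  have hB : 0 < σ (t ⁻¹' Set.Iio 0) :=
    sphMeas_pos_of_isOpen hd1 (isOpen_Iio.preimage htc)
      ⟨ν, by simp [Set.mem_preimage, hνval]⟩
  have hsub : (t ⁻¹' Set.Ioi 0) ×ˢ (t ⁻¹' Set.Iio 0) ⊆ Function.support F := by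
    rintro ⟨z, w⟩ ⟨hz, hw⟩
    have hzw : t w < t z := lt_trans hw hz
    have h1 : 0 < t z - t w := sub_pos.2 hzw
    have h2 : Real.exp (κ₁ * t z + κ₂ * t w) < Real.exp (κ₂ * t z + κ₁ * t w) :=
      Real.exp_lt_exp.2 (by nlinarith)
    exact ne_of_gt (mul_pos h1 (sub_pos.2 h2))
  have hsupp : 0 < π (Function.support F) := by
    refine lt_of_lt_of_le ?_ (measure_mono hsub)
    rw [hπ, Measure.prod_prod]
    exact ENNReal.mul_pos hA.ne' hB.ne'
  have hFpos : 0 < ∫ p, F p ∂π :=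
    (integral_pos_iff_support_of_nonneg hFnonneg hFint).2 hsupp
  -- expand the integral of F
  have hFeq : ∀ p, F p =
      (t p.1 * Real.exp (κ₂ * t p.1)) * Real.exp (κ₁ * t p.2)
      - (t p.1 * Real.exp (κ₁ * t p.1)) * Real.exp (κ₂ * t p.2)
      - Real.exp (κ₂ * t p.1) * (t p.2 * Real.exp (κ₁ * t p.2))
      + Real.exp (κ₁ * t p.1) * (t p.2 * Real.exp (κ₂ * t p.2)) := by
    intro p
    rw [hF]
    simp only [Real.exp_add]
    ring
  have e1 : ∫ p : (sphere (0 : EuclideanSpace ℝ (Fin d)) 1) ×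
      (sphere (0 : EuclideanSpace ℝ (Fin d)) 1),
      (t p.1 * Real.exp (κ₂ * t p.1)) * Real.exp (κ₁ * t p.2) ∂π =
      Mfun d μ κ₂ * Zfun d μ κ₁ := by
    rw [hMdef, hZdef]
    exact integral_prod_mul (fun z => t z * Real.exp (κ₂ * t z))
      (fun z => Real.exp (κ₁ * t z))
  have e2 : ∫ p : (sphere (0 : EuclideanSpace ℝ (Fin d)) 1) ×
      (sphere (0 : EuclideanSpace ℝ (Fin d)) 1),
      (t p.1 * Real.exp (κ₁ * t p.1)) * Real.exp (κ₂ * t p.2) ∂π =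
      Mfun d μ κ₁ * Zfun d μ κ₂ := by
    rw [hMdef, hZdef]
    exact integral_prod_mul (fun z => t z * Real.exp (κ₁ * t z))
      (fun z => Real.exp (κ₂ * t z))
  have e3 : ∫ p : (sphere (0 : EuclideanSpace ℝ (Fin d)) 1) ×
      (sphere (0 : EuclideanSpace ℝ (Fin d)) 1),
      Real.exp (κ₂ * t p.1) * (t p.2 * Real.exp (κ₁ * t p.2)) ∂π =
      Zfun d μ κ₂ * Mfun d μ κ₁ := by
    rw [hMdef, hZdef]
    exact integral_prod_mul (fun z => Real.exp (κ₂ * t z))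
      (fun z => t z * Real.exp (κ₁ * t z))
  have e4 : ∫ p : (sphere (0 : EuclideanSpace ℝ (Fin d)) 1) ×
      (sphere (0 : EuclideanSpace ℝ (Fin d)) 1),
      Real.exp (κ₁ * t p.1) * (t p.2 * Real.exp (κ₂ * t p.2)) ∂π =
      Zfun d μ κ₁ * Mfun d μ κ₂ := by
    rw [hMdef, hZdef]
    exact integral_prod_mul (fun z => Real.exp (κ₁ * t z))
      (fun z => t z * Real.exp (κ₂ * t z))
  have i2 : Integrable (fun p : (sphere (0 : EuclideanSpace ℝ (Fin d)) 1) ×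
      (sphere (0 : EuclideanSpace ℝ (Fin d)) 1) =>
      (t p.1 * Real.exp (κ₁ * t p.1)) * Real.exp (κ₂ * t p.2)) π :=
    hprodint ((ht1.mul (Real.continuous_exp.comp (continuous_const.mul ht1))).mul
      (Real.continuous_exp.comp (continuous_const.mul ht2)))
  have i1 : Integrable (fun p : (sphere (0 : EuclideanSpace ℝ (Fin d)) 1) ×
      (sphere (0 : EuclideanSpace ℝ (Fin d)) 1) =>
      (t p.1 * Real.exp (κ₂ * t p.1)) * Real.exp (κ₁ * t p.2)) π :=
    hprodint ((ht1.mul (Real.continuous_exp.comp (continuous_const.mul ht1))).mul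
      (Real.continuous_exp.comp (continuous_const.mul ht2)))
  have i3 : Integrable (fun p : (sphere (0 : EuclideanSpace ℝ (Fin d)) 1) ×
      (sphere (0 : EuclideanSpace ℝ (Fin d)) 1) =>
      Real.exp (κ₂ * t p.1) * (t p.2 * Real.exp (κ₁ * t p.2))) π :=
    hprodint ((Real.continuous_exp.comp (continuous_const.mul ht1)).mul
      (ht2.mul (Real.continuous_exp.comp (continuous_const.mul ht2))))
  have i4 : Integrable (fun p : (sphere (0 : EuclideanSpace ℝ (Fin d)) 1) ×
      (sphere (0 : EuclideanSpace ℝ (Fin d)) 1) =>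
      Real.exp (κ₁ * t p.1) * (t p.2 * Real.exp (κ₂ * t p.2))) π :=
    hprodint ((Real.continuous_exp.comp (continuous_const.mul ht1)).mul
      (ht2.mul (Real.continuous_exp.comp (continuous_const.mul ht2))))
  have hexpand : ∫ p, F p ∂π =
      Mfun d μ κ₂ * Zfun d μ κ₁ - Mfun d μ κ₁ * Zfun d μ κ₂
      - Zfun d μ κ₂ * Mfun d μ κ₁ + Zfun d μ κ₁ * Mfun d μ κ₂ := by
    rw [show (fun p => F p) = fun p =>
      ((t p.1 * Real.exp (κ₂ * t p.1)) * Real.exp (κ₁ * t p.2)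
      - (t p.1 * Real.exp (κ₁ * t p.1)) * Real.exp (κ₂ * t p.2)
      - Real.exp (κ₂ * t p.1) * (t p.2 * Real.exp (κ₁ * t p.2)))
      + Real.exp (κ₁ * t p.1) * (t p.2 * Real.exp (κ₂ * t p.2)) from funext hFeq]
    have H2 : Integrable (fun p : (sphere (0 : EuclideanSpace ℝ (Fin d)) 1) ×
        (sphere (0 : EuclideanSpace ℝ (Fin d)) 1) =>
        (t p.1 * Real.exp (κ₂ * t p.1)) * Real.exp (κ₁ * t p.2)
        - (t p.1 * Real.exp (κ₁ * t p.1)) * Real.exp (κ₂ * t p.2)) π := i1.sub i2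
    have H1 : Integrable (fun p : (sphere (0 : EuclideanSpace ℝ (Fin d)) 1) ×
        (sphere (0 : EuclideanSpace ℝ (Fin d)) 1) =>
        (t p.1 * Real.exp (κ₂ * t p.1)) * Real.exp (κ₁ * t p.2)
        - (t p.1 * Real.exp (κ₁ * t p.1)) * Real.exp (κ₂ * t p.2)
        - Real.exp (κ₂ * t p.1) * (t p.2 * Real.exp (κ₁ * t p.2))) π := H2.sub i3
    rw [integral_add H1 i4, integral_sub H2 i3, integral_sub i1 i2, e1, e2, e3, e4]
  rw [div_lt_div_iff₀ (hZpos κ₁) (hZpos κ₂)]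
  nlinarith [hFpos, hexpand]
end

section
/- For any unit vector μ on the unit sphere S of E, the differential entropy H_μ of the vMF distribution is differentiable on ℝ and satisfies H_μ'(κ) = −κ · A'(κ) for every κ, where A(κ) = Z_μ'(κ)/Z_μ(κ) is the mean resultant function; in particular H_μ'(κ) < 0 for every κ > 0. -/
open MeasureTheory Metric
open scoped RealInnerProductSpace Pointwise

/-- The vMF density `q_{μ,κ}(z) = Z_μ(κ)⁻¹ · exp (κ ⟪μ, z⟫)` with respect to `σ`. -/
noncomputable def qfun (d : ℕ) (μ : sphere (0 : EuclideanSpace ℝ (Fin d)) 1) (κ : ℝ)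
    (z : sphere (0 : EuclideanSpace ℝ (Fin d)) 1) : ℝ :=
  (Zfun d μ κ)⁻¹ *
    Real.exp (κ * ⟪(μ : EuclideanSpace ℝ (Fin d)), (z : EuclideanSpace ℝ (Fin d))⟫)

/-- The differential entropy `H_μ(κ) = −∫_{z ∈ S} q_{μ,κ}(z) · log q_{μ,κ}(z) dσ(z)`. -/
noncomputable def Hent (d : ℕ) (μ : sphere (0 : EuclideanSpace ℝ (Fin d)) 1) (κ : ℝ) : ℝ :=
  -∫ z, qfun d μ κ z * Real.log (qfun d μ κ z) ∂(sphMeas d)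


section aux
variable {d : ℕ}
local notation "E'" => EuclideanSpace ℝ (Fin d)
local notation "S'" => sphere (0 : EuclideanSpace ℝ (Fin d)) 1

instance inst_s7 : IsFiniteMeasure (sphMeas d) := by unfold sphMeas; infer_instance

lemma cont_c (μ : S') : Continuous (fun z : S' => ⟪(μ:E'), (z:E')⟫) :=
  Continuous.inner continuous_const continuous_subtype_val

lemma abs_c_le (μ z : S') : |⟪(μ:E'), (z:E')⟫| ≤ 1 := by
  have := abs_real_inner_le_norm (μ:E') (z:E')
  simpa using this

lemma integrable_cont {f : S' → ℝ} (hf : Continuous f) : Integrable f (sphMeas d) :=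
  hf.integrable_of_hasCompactSupport (HasCompactSupport.of_compactSpace f)

lemma sphMeas_univ_ne (hd : 1 ≤ d) : sphMeas d Set.univ ≠ 0 := by
  rw [sphMeas, Measure.toSphere_apply_univ]
  refine (ENNReal.mul_pos ?_ (measure_ball_pos _ _ one_pos).ne').ne'
  simp [finrank_euclideanSpace_fin]; omega

lemma sphMeas_isOpenPos (hd : 1 ≤ d) : (sphMeas d).IsOpenPosMeasure := by
  constructor
  intro U hU hUne
  rw [sphMeas, Measure.toSphere_apply' _ hU.measurableSet]
  set U' : Set E' := Subtype.val '' U with hU'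
  obtain ⟨W, hW, hWU⟩ := isOpen_induced_iff.mp hU
  have hU'W : U' = W ∩ sphere (0:E') 1 := by
    rw [hU', ← hWU, Subtype.image_preimage_coe]
    exact Set.inter_comm _ _
  set f : E' → E' := fun x => ‖x‖⁻¹ • x with hf
  have hfx : ∀ x : E', x ≠ 0 → ‖f x‖ = 1 := by
    intro x hx
    rw [hf]; simp [norm_smul, abs_inv, abs_norm,
      inv_mul_cancel₀ (norm_ne_zero_iff.mpr hx)]
  have hV : Set.Ioo (0:ℝ) 1 • U' = ({(0:E')}ᶜ ∩ f ⁻¹' W) ∩ ball 0 1 := by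
    ext x
    constructor
    · rintro ⟨r, hr, u, hu, rfl⟩
      have hu1 : ‖u‖ = 1 := by
        have := (hU'W ▸ hu).2; simpa using this
      have hru : ‖r • u‖ = r := by
        rw [norm_smul, hu1, mul_one, Real.norm_eq_abs, abs_of_pos hr.1]
      have hne : r • u ≠ 0 := by
        intro h; rw [h, norm_zero] at hru; exact hr.1.ne' hru.symm
      refine ⟨⟨hne, ?_⟩, ?_⟩
      · show f (r • u) ∈ W
        have : f (r • u) = u := by
          rw [hf]; simp only [hru, smul_smul]
          rw [inv_mul_cancel₀ hr.1.ne', one_smul]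
        rw [this]; exact (hU'W ▸ hu).1
      · simp [mem_ball_zero_iff, hru, hr.2]
    · rintro ⟨⟨hne, hfw⟩, hball⟩
      have hne' : x ≠ 0 := hne
      refine ⟨‖x‖, ⟨norm_pos_iff.mpr hne', mem_ball_zero_iff.mp hball⟩, f x, ?_, ?_⟩
      · rw [hU'W]
        exact ⟨hfw, by simpa [mem_sphere_zero_iff_norm] using hfx x hne'⟩
      · rw [hf]; simp [smul_smul, mul_inv_cancel₀ (norm_ne_zero_iff.mpr hne')]
  rw [hV]
  have hopen : IsOpen (({(0:E')}ᶜ ∩ f ⁻¹' W) ∩ ball 0 1) := by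
    refine IsOpen.inter ?_ isOpen_ball
    refine ContinuousOn.isOpen_inter_preimage ?_ isOpen_compl_singleton hW
    exact ((continuous_norm.continuousOn).inv₀
      (fun x hx => norm_ne_zero_iff.mpr hx)).smul continuousOn_id
  have hne : (({(0:E')}ᶜ ∩ f ⁻¹' W) ∩ ball 0 1).Nonempty := by
    obtain ⟨z, hz⟩ := hUne
    have hzU' : (z : E') ∈ U' := ⟨z, hz, rfl⟩
    refine ⟨(1/2 : ℝ) • (z : E'), ?_⟩
    rw [← hV]
    exact ⟨1/2, by norm_num, _, hzU', rfl⟩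
  refine (ENNReal.mul_pos ?_ (hopen.measure_pos volume hne).ne').ne'
  simp [finrank_euclideanSpace_fin]
  omega

lemma Zfun_pos (hd : 1 ≤ d) (μ : S') (κ : ℝ) : 0 < Zfun d μ κ := by
  have hμ : (sphMeas d Set.univ).toReal > 0 :=
    ENNReal.toReal_pos (sphMeas_univ_ne hd) (measure_ne_top _ _)
  have h1 : ∀ z : S', Real.exp (-|κ|) ≤ Real.exp (κ * ⟪(μ:E'), (z:E')⟫) := by
    intro z
    apply Real.exp_le_exp.mpr
    have := abs_c_le μ z
    nlinarith [neg_abs_le (κ * ⟪(μ:E'), (z:E')⟫), abs_mul κ ⟪(μ:E'), (z:E')⟫,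
      abs_nonneg κ, neg_abs_le κ]
  have hint : Integrable (fun z : S' => Real.exp (κ * ⟪(μ:E'), (z:E')⟫)) (sphMeas d) :=
    integrable_cont ((continuous_const.mul (cont_c μ)).rexp)
  have := integral_mono (integrable_const (Real.exp (-|κ|))) hint h1
  rw [integral_const, smul_eq_mul] at this
  calc (0:ℝ) < (sphMeas d Set.univ).toReal * Real.exp (-|κ|) := by positivity
    _ ≤ Zfun d μ κ := this

/-- General differentiation under the integral sign. -/
lemma hasDerivAt_wint (μ : S') (g : S' → ℝ) (hg : Continuous g) (hgb : ∀ z, |g z| ≤ 1)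
    (κ : ℝ) :
    HasDerivAt (fun t => ∫ z, g z * Real.exp (t * ⟪(μ:E'), (z:E')⟫) ∂(sphMeas d))
      (∫ z, g z * ⟪(μ:E'), (z:E')⟫ * Real.exp (κ * ⟪(μ:E'), (z:E')⟫) ∂(sphMeas d)) κ := by
  set c : S' → ℝ := fun z => ⟪(μ:E'), (z:E')⟫ with hc
  have hcont : Continuous c := cont_c μ
  have key := hasDerivAt_integral_of_dominated_loc_of_deriv_le (μ := sphMeas d)
    (F := fun t z => g z * Real.exp (t * c z))
    (F' := fun t z => g z * c z * Real.exp (t * c z))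
    (bound := fun _ => Real.exp (|κ| + 1)) (x₀ := κ) (s := ball κ 1) (ball_mem_nhds κ one_pos)
    ?_ ?_ ?_ ?_ ?_ ?_
  · exact key.2
  · filter_upwards with t
    exact (hg.mul ((continuous_const.mul hcont).rexp)).aestronglyMeasurable
  · exact integrable_cont (hg.mul ((continuous_const.mul hcont).rexp))
  · exact ((hg.mul hcont).mul ((continuous_const.mul hcont).rexp)).aestronglyMeasurable
  · filter_upwards with z t ht
    have h1 : |g z * c z| ≤ 1 := by
      rw [abs_mul]
      exact mul_le_one₀ (hgb z) (abs_nonneg _) (abs_c_le μ z)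
    have h2 : t * c z ≤ |κ| + 1 := by
      have : |t * c z| ≤ |t| := by
        rw [abs_mul]
        nlinarith [abs_c_le μ z, abs_nonneg t]
      have ht' : |t| ≤ |κ| + 1 := by
        have := mem_ball_iff_norm.mp ht
        rw [Real.norm_eq_abs] at this
        nlinarith [abs_sub_abs_le_abs_sub t κ]
      nlinarith [le_abs_self (t * c z)]
    calc ‖g z * c z * Real.exp (t * c z)‖
        = |g z * c z| * Real.exp (t * c z) := by
          rw [norm_mul, Real.norm_eq_abs, Real.norm_eq_abs, Real.abs_exp]
      _ ≤ 1 * Real.exp (|κ| + 1) := by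
          exact mul_le_mul h1 (Real.exp_le_exp.mpr h2) (Real.exp_pos _).le zero_le_one
      _ = Real.exp (|κ| + 1) := one_mul _
  · exact integrable_const _
  · filter_upwards with z t _
    have h1 : HasDerivAt (fun t : ℝ => t * c z) (c z) t := hasDerivAt_mul_const (c z)
    have h2 := h1.exp
    have h3 := h2.const_mul (g z)
    rw [show g z * c z * Real.exp (t * c z) = g z * (Real.exp (t * c z) * c z) by ring]
    exact h3
end aux

section aux2
variable {d : ℕ}
local notation "E'" => EuclideanSpace ℝ (Fin d)
local notation "S'" => sphere (0 : EuclideanSpace ℝ (Fin d)) 1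

noncomputable def Qfun (d : ℕ) (μ : sphere (0 : EuclideanSpace ℝ (Fin d)) 1) (κ : ℝ) : ℝ :=
  ∫ z, ⟪(μ : EuclideanSpace ℝ (Fin d)), (z : EuclideanSpace ℝ (Fin d))⟫ ^ 2 *
      Real.exp (κ * ⟪(μ : EuclideanSpace ℝ (Fin d)), (z : EuclideanSpace ℝ (Fin d))⟫)
    ∂(sphMeas d)

lemma hasDerivAt_Z (μ : S') (κ : ℝ) : HasDerivAt (Zfun d μ) (Mfun d μ κ) κ := by
  have h := hasDerivAt_wint μ (fun _ => 1) continuous_const (by simp) κ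
  simp only [one_mul] at h
  exact h

lemma hasDerivAt_M (μ : S') (κ : ℝ) : HasDerivAt (Mfun d μ) (Qfun d μ κ) κ := by
  have h := hasDerivAt_wint μ (fun z => ⟪(μ:E'), (z:E')⟫) (cont_c μ) (abs_c_le μ) κ
  have e1 : Qfun d μ κ = ∫ z, ⟪(μ:E'), (z:E')⟫ * ⟪(μ:E'), (z:E')⟫ *
      Real.exp (κ * ⟪(μ:E'), (z:E')⟫) ∂(sphMeas d) := by
    unfold Qfun; congr 1; funext z; ring
  rw [e1]
  exact h
end aux2

section aux3
variable {d : ℕ}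
local notation "E'" => EuclideanSpace ℝ (Fin d)
local notation "S'" => sphere (0 : EuclideanSpace ℝ (Fin d)) 1

lemma Hent_eq (hd : 1 ≤ d) (μ : S') (κ : ℝ) :
    Hent d μ κ = Real.log (Zfun d μ κ) - κ * (Mfun d μ κ / Zfun d μ κ) := by
  set Z := Zfun d μ κ with hZdef
  have hZ : 0 < Z := Zfun_pos hd μ κ
  set c : S' → ℝ := fun z => ⟪(μ:E'), (z:E')⟫ with hc
  have hcont : Continuous c := cont_c μ
  have hexp : Continuous fun z : S' => Real.exp (κ * c z) :=
    (continuous_const.mul hcont).rexp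
  have heq : ∀ z : S', qfun d μ κ z * Real.log (qfun d μ κ z) =
      (κ * Z⁻¹) * (c z * Real.exp (κ * c z)) - (Real.log Z * Z⁻¹) * Real.exp (κ * c z) := by
    intro z
    have hlog : Real.log (qfun d μ κ z) = -Real.log Z + κ * c z := by
      rw [qfun, Real.log_mul (inv_ne_zero hZ.ne') (Real.exp_ne_zero _),
        Real.log_inv, Real.log_exp]
    rw [hlog, qfun]
    ring
  have hint1 : Integrable (fun z : S' => (κ * Z⁻¹) * (c z * Real.exp (κ * c z)))
      (sphMeas d) := (integrable_cont (hcont.mul hexp)).const_mul _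
  have hint2 : Integrable (fun z : S' => (Real.log Z * Z⁻¹) * Real.exp (κ * c z))
      (sphMeas d) := (integrable_cont hexp).const_mul _
  rw [Hent]
  rw [integral_congr_ae (Filter.Eventually.of_forall heq), integral_sub hint1 hint2,
    integral_const_mul, integral_const_mul]
  have hZi : (∫ z, Real.exp (κ * c z) ∂(sphMeas d)) = Z := rfl
  have hMi : (∫ z, c z * Real.exp (κ * c z) ∂(sphMeas d)) = Mfun d μ κ := rfl
  rw [hZi, hMi]
  field_simp
  ring

lemma var_pos (hd : 1 ≤ d) (μ : S') (κ : ℝ) :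
    Mfun d μ κ ^ 2 < Qfun d μ κ * Zfun d μ κ := by
  haveI := sphMeas_isOpenPos (d := d) hd
  set Z := Zfun d μ κ with hZdef
  set M := Mfun d μ κ with hMdef
  have hZ : 0 < Z := Zfun_pos hd μ κ
  set m : ℝ := M / Z with hm
  set c : S' → ℝ := fun z => ⟪(μ:E'), (z:E')⟫ with hc
  have hcont : Continuous c := cont_c μ
  have hexp : Continuous fun z : S' => Real.exp (κ * c z) :=
    (continuous_const.mul hcont).rexp
  set f : S' → ℝ := fun z => (c z - m) ^ 2 * Real.exp (κ * c z) with hfd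
  have hfc : Continuous f := (((hcont.sub continuous_const).pow 2).mul hexp)
  have hfnn : ∀ z, 0 ≤ f z := fun z => by positivity
  have hfi : Integrable f (sphMeas d) := integrable_cont hfc
  -- value of the integral
  have hexpand : ∀ z : S', f z = (c z ^ 2 * Real.exp (κ * c z))
      - (2 * m) * (c z * Real.exp (κ * c z)) + (m ^ 2) * Real.exp (κ * c z) := by
    intro z; rw [hfd]; ring
  have hint1 : Integrable (fun z : S' => c z ^ 2 * Real.exp (κ * c z)) (sphMeas d) :=
    integrable_cont ((hcont.pow 2).mul hexp)
  have hint2 : Integrable (fun z : S' => (2 * m) * (c z * Real.exp (κ * c z))) (sphMeas d) :=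
    (integrable_cont (hcont.mul hexp)).const_mul _
  have hint3 : Integrable (fun z : S' => (m ^ 2) * Real.exp (κ * c z)) (sphMeas d) :=
    (integrable_cont hexp).const_mul _
  have hint12 : Integrable (fun z : S' => c z ^ 2 * Real.exp (κ * c z)
      - (2 * m) * (c z * Real.exp (κ * c z))) (sphMeas d) := hint1.sub hint2
  have hval : ∫ z, f z ∂(sphMeas d) = Qfun d μ κ - (2 * m) * M + m ^ 2 * Z := by
    rw [integral_congr_ae (Filter.Eventually.of_forall hexpand),
      integral_add hint12 hint3, integral_sub hint1 hint2,
      integral_const_mul, integral_const_mul]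
    rfl
  -- the integral is strictly positive
  have hpos : 0 < ∫ z, f z ∂(sphMeas d) := by
    rcases lt_or_eq_of_le (integral_nonneg (f := f) hfnn) with h | h
    · exact h
    · exfalso
      have hzero : f =ᵐ[sphMeas d] 0 :=
        (integral_eq_zero_iff_of_nonneg hfnn hfi).mp h.symm
      have hcz : c =ᵐ[sphMeas d] fun _ => m := by
        filter_upwards [hzero] with z hz
        have : (c z - m) ^ 2 * Real.exp (κ * c z) = 0 := hz
        have h2 : (c z - m) ^ 2 = 0 := by
          rcases mul_eq_zero.mp this with h' | h'
          · exact h'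
          · exact absurd h' (Real.exp_ne_zero _)
        have := pow_eq_zero_iff (n := 2) (by norm_num) |>.mp h2
        linarith [this]
      have := (Continuous.ae_eq_iff_eq (sphMeas d) hcont continuous_const).mp hcz
      have h1 : c μ = m := congrFun this μ
      have h2 : c (-μ) = m := congrFun this (-μ)
      have hμ1 : c μ = 1 := by
        rw [hc]
        simp only [real_inner_self_eq_norm_sq]
        rw [norm_eq_of_mem_sphere μ]; norm_num
      have hμ2 : c (-μ) = -1 := by
        have he : c (-μ) = ⟪(μ:E'), -(μ:E')⟫ := rfl
        rw [he, inner_neg_right, real_inner_self_eq_norm_sq, norm_eq_of_mem_sphere μ]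
        norm_num
      rw [hμ1] at h1; rw [hμ2] at h2
      linarith
  have : 0 < Qfun d μ κ - (2 * m) * M + m ^ 2 * Z := hval ▸ hpos
  have hmz : m * Z = M := by rw [hm]; field_simp
  nlinarith [hZ, sq_nonneg m]
end aux3


/-- The vMF differential entropy is differentiable on `ℝ` with `H_μ'(κ) = −κ · A'(κ)`,
where `A(κ) = Z_μ'(κ)/Z_μ(κ)`; in particular `H_μ'(κ) < 0` for every `κ > 0`. -/
theorem vMF_entropy_deriv (d : ℕ) (hd : 2 ≤ d)
    (μ : sphere (0 : EuclideanSpace ℝ (Fin d)) 1) :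
    Differentiable ℝ (Hent d μ) ∧
      (∀ κ : ℝ, deriv (Hent d μ) κ = -(κ * deriv (fun t => Mfun d μ t / Zfun d μ t) κ)) ∧
      (∀ κ : ℝ, 0 < κ → deriv (Hent d μ) κ < 0) := by
  have hd1 : 1 ≤ d := le_trans one_le_two hd
  have hHeq : Hent d μ = fun t => Real.log (Zfun d μ t) - t * (Mfun d μ t / Zfun d μ t) :=
    funext fun t => Hent_eq hd1 μ t
  have hA : ∀ κ : ℝ, HasDerivAt (fun t => Mfun d μ t / Zfun d μ t)
      ((Qfun d μ κ * Zfun d μ κ - Mfun d μ κ * Mfun d μ κ) / Zfun d μ κ ^ 2) κ := fun κ =>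
    (hasDerivAt_M μ κ).div (hasDerivAt_Z μ κ) (Zfun_pos hd1 μ κ).ne'
  have hH : ∀ κ : ℝ, HasDerivAt (Hent d μ)
      (-(κ * ((Qfun d μ κ * Zfun d μ κ - Mfun d μ κ * Mfun d μ κ) / Zfun d μ κ ^ 2))) κ := by
    intro κ
    rw [hHeq]
    have hlog : HasDerivAt (fun t => Real.log (Zfun d μ t)) (Mfun d μ κ / Zfun d μ κ) κ :=
      (hasDerivAt_Z μ κ).log (Zfun_pos hd1 μ κ).ne'
    have hmul : HasDerivAt (fun t => t * (Mfun d μ t / Zfun d μ t))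
        (1 * (Mfun d μ κ / Zfun d μ κ) +
          κ * ((Qfun d μ κ * Zfun d μ κ - Mfun d μ κ * Mfun d μ κ) / Zfun d μ κ ^ 2)) κ :=
      (hasDerivAt_id' κ).mul (hA κ)
    have hsub := hlog.sub hmul
    have hval : Mfun d μ κ / Zfun d μ κ - (1 * (Mfun d μ κ / Zfun d μ κ) +
        κ * ((Qfun d μ κ * Zfun d μ κ - Mfun d μ κ * Mfun d μ κ) / Zfun d μ κ ^ 2)) =
        -(κ * ((Qfun d μ κ * Zfun d μ κ - Mfun d μ κ * Mfun d μ κ) / Zfun d μ κ ^ 2)) := by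
      ring
    exact hval ▸ hsub
  refine ⟨fun κ => (hH κ).differentiableAt, fun κ => ?_, fun κ hκ => ?_⟩
  · rw [(hH κ).deriv, (hA κ).deriv]
  · rw [(hH κ).deriv]
    have hZ := Zfun_pos hd1 μ κ
    have hvar := var_pos hd1 μ κ
    have hpos : 0 < κ * ((Qfun d μ κ * Zfun d μ κ - Mfun d μ κ * Mfun d μ κ) / Zfun d μ κ ^ 2) :=
      mul_pos hκ (div_pos (by nlinarith) (pow_pos hZ 2))
    linarith
end
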